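/- arXiv:2605.23761 — 2 statements merged into one kernel-verified Lean document; each statement's English description precedes it below -/
import Mathlib

section
/- Let A be a symmetric n×n real matrix (not necessarily positive definite), H₀ a symmetric positive-definite n×n matrix, and x₀ ∈ ℝⁿ. Run PCG on q with preconditioner H₀ from x₀, and run a Broyden-class quasi-Newton method with exact line search from the same x₀ with initial matrix H₀ and parameters φ_k. Suppose PCG iterations 0,…,j are well defined and, for k = 0,…,j, φ_k ≠ φ_k^c, s_kᵀ A s_k ≠ 0 and y_kᵀ H_k y_k ≠ 0. Then, as long as g_k ≠ 0, there exists a nonzero scalar γ_k (with γ₀ = 1) such that the Broyden search direction satisfies d_k = γ_k d_k^{PCG}, and the scalars obey the recurrence γ_{k+1} = (γ_k g_kᵀH₀g_k + φ_k g_{k+1}ᵀH₀g_{k+1}) / (γ_k g_kᵀH₀g_k + g_{k+1}ᵀH₀g_{k+1}). Consequently the steps s_k generated by any Broyden-class method are independent of φ_k and coincide with the PCG steps. -/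
/-!
By induction on `k`, the Broyden matrix `H k` is symmetric and nonsingular, sends `g k` to
`-γ k • dC k`, and acts as `H₀` on every vector orthogonal to `dC 0, …, dC k`. An exact line search
does not see a rescaling of the direction, so the Broyden iterates are the PCG iterates. The PCG
relations `g (k + 1) ⊥ dC i` (`i ≤ k`) and `g k ⊥ H₀ g (k + 1)` then collapse the rank-three
update applied to `g (k + 1)` to `-γ (k + 1) • dC (k + 1)`, and keep `H (k + 1) = H₀` on the
orthogonal complement of `dC 0, …, dC (k + 1)`. Finally `φ k ≠ φᶜ k` is exactly what keeps
`H (k + 1)` nonsingular, which forces `γ (k + 1) ≠ 0` since `g (k + 1) ≠ 0`.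
-/

open Matrix

theorem Matrix.IsSymm.dotProduct_mulVec_comm {ι R : Type*} [Fintype ι] [CommSemiring R]
    {M : Matrix ι ι R} (hM : M.IsSymm) (u v : ι → R) : u ⬝ᵥ (M *ᵥ v) = v ⬝ᵥ (M *ᵥ u) := by
  rw [dotProduct_mulVec, ← mulVec_transpose, dotProduct_comm, hM.eq]

variable {ι K : Type*} [Fintype ι] [Field K]

def exactStep (A : Matrix ι ι K) (g d : ι → K) : K := -(g ⬝ᵥ d) / (d ⬝ᵥ (A *ᵥ d))

theorem exactStep_smul_smul (A : Matrix ι ι K) (g d : ι → K) {c : K} (hc : c ≠ 0) :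
    exactStep A g (c • d) • (c • d) = exactStep A g d • d := by
  simp only [exactStep, smul_smul, dotProduct_smul, mulVec_smul, smul_dotProduct, smul_eq_mul]
  congr 1
  field_simp

structure IsPCG (A H₀ : Matrix ι ι K) (b : ι → K) (x d g : ℕ → ι → K) : Prop where
  grad_eq : ∀ k, g k = A *ᵥ x k - b
  dir_zero : d 0 = -(H₀ *ᵥ g 0)
  dir_succ : ∀ k, d (k + 1) = -(H₀ *ᵥ g (k + 1)) +
    ((g (k + 1) ⬝ᵥ (H₀ *ᵥ g (k + 1))) / (g k ⬝ᵥ (H₀ *ᵥ g k))) • d k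
  pos_succ : ∀ k, x (k + 1) = x k + exactStep A (g k) (d k) • d k

namespace IsPCG

variable {A H₀ : Matrix ι ι K} {b : ι → K} {x d g : ℕ → ι → K}

theorem grad_succ (h : IsPCG A H₀ b x d g) (k : ℕ) :
    g (k + 1) = g k + exactStep A (g k) (d k) • (A *ᵥ d k) := by
  rw [h.grad_eq (k + 1), h.pos_succ, mulVec_add, mulVec_smul, add_sub_right_comm, ← h.grad_eq k]

theorem precond_grad_zero (h : IsPCG A H₀ b x d g) : H₀ *ᵥ g 0 = -d 0 := by
  rw [h.dir_zero, neg_neg]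

theorem precond_grad_succ (h : IsPCG A H₀ b x d g) (k : ℕ) :
    H₀ *ᵥ g (k + 1) =
      ((g (k + 1) ⬝ᵥ (H₀ *ᵥ g (k + 1))) / (g k ⬝ᵥ (H₀ *ᵥ g k))) • d k - d (k + 1) := by
  rw [h.dir_succ]
  abel

theorem grad_succ_dotProduct_dir (h : IsPCG A H₀ b x d g) {k : ℕ} (hk : d k ⬝ᵥ (A *ᵥ d k) ≠ 0) :
    g (k + 1) ⬝ᵥ d k = 0 := by
  rw [h.grad_succ, add_dotProduct, smul_dotProduct, exactStep, dotProduct_comm (A *ᵥ d k),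
    smul_eq_mul]
  field_simp
  ring

theorem grad_dotProduct_dir (h : IsPCG A H₀ b x d g) {m : ℕ}
    (hm : ∀ i < m, g m ⬝ᵥ d i = 0) : g m ⬝ᵥ d m = -(g m ⬝ᵥ (H₀ *ᵥ g m)) := by
  cases m with
  | zero => rw [h.dir_zero, dotProduct_neg]
  | succ m => rw [h.dir_succ, dotProduct_add, dotProduct_smul, hm m m.lt_succ_self, smul_zero,
      add_zero, dotProduct_neg]

theorem exactStep_eq (h : IsPCG A H₀ b x d g) {m : ℕ} (hm : ∀ i < m, g m ⬝ᵥ d i = 0) :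
    exactStep A (g m) (d m) = (g m ⬝ᵥ (H₀ *ᵥ g m)) / (d m ⬝ᵥ (A *ᵥ d m)) := by
  rw [exactStep, h.grad_dotProduct_dir hm, neg_neg]

theorem orthogonal (h : IsPCG A H₀ b x d g) (hA : A.IsSymm) (hH₀ : H₀.IsSymm) {m : ℕ}
    (hg : ∀ k < m, g k ⬝ᵥ (H₀ *ᵥ g k) ≠ 0) (hd : ∀ k < m, d k ⬝ᵥ (A *ᵥ d k) ≠ 0) :
    ∀ i < m, g m ⬝ᵥ d i = 0 ∧ g m ⬝ᵥ (H₀ *ᵥ g i) = 0 ∧ d i ⬝ᵥ (A *ᵥ d m) = 0 := by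
  induction m using Nat.strong_induction_on with
  | _ m ih =>
  cases m with
  | zero => simp
  | succ m =>
  have ih' := fun i hi => ih i hi (fun k hk => hg k (by omega)) (fun k hk => hd k (by omega))
  have hdir : ∀ i < m + 1, g (m + 1) ⬝ᵥ d i = 0 := by
    intro i hi
    rcases Nat.lt_succ_iff_lt_or_eq.mp hi with hi | rfl
    · rw [h.grad_succ, add_dotProduct, smul_dotProduct, (ih' m m.lt_succ_self i hi).1,
        dotProduct_comm, (ih' m m.lt_succ_self i hi).2.2, smul_zero, add_zero]
    · exact h.grad_succ_dotProduct_dir (hd i (by omega))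
  have hgrad : ∀ i < m + 1, g (m + 1) ⬝ᵥ (H₀ *ᵥ g i) = 0 := by
    rintro (_ | i) hi
    · rw [h.precond_grad_zero, dotProduct_neg, hdir 0 hi, neg_zero]
    · rw [h.precond_grad_succ, dotProduct_sub, dotProduct_smul, hdir i (by omega), hdir (i + 1) hi,
        smul_zero, sub_zero]
  -- `exactStep i • A d i = g (i + 1) - g i` turns conjugacy against `H₀ g (m + 1)` into `hgrad`.
  have hstep : ∀ i ≤ m, exactStep A (g i) (d i) * (d i ⬝ᵥ (A *ᵥ (H₀ *ᵥ g (m + 1))))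
      = g (m + 1) ⬝ᵥ (H₀ *ᵥ g (i + 1)) - g (m + 1) ⬝ᵥ (H₀ *ᵥ g i) := by
    intro i _
    rw [hH₀.dotProduct_mulVec_comm (g (m + 1)), hH₀.dotProduct_mulVec_comm (g (m + 1)),
      ← sub_dotProduct, h.grad_succ i, add_sub_cancel_left, smul_dotProduct, smul_eq_mul,
      hA.dotProduct_mulVec_comm, dotProduct_comm]
  refine fun i hi => ⟨hdir i hi, hgrad i hi, ?_⟩
  have hαi : exactStep A (g i) (d i) ≠ 0 := by
    rw [h.exactStep_eq fun k hk => (ih' i (by omega) k hk).1]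
    exact div_ne_zero (hg i (by omega)) (hd i (by omega))
  rw [h.dir_succ, mulVec_add, mulVec_smul, mulVec_neg, dotProduct_add, dotProduct_neg,
    dotProduct_smul, smul_eq_mul]
  rcases Nat.lt_succ_iff_lt_or_eq.mp hi with hi | rfl
  · have := hstep i hi.le
    rw [hgrad (i + 1) (by omega), hgrad i (by omega), sub_zero, mul_eq_zero] at this
    rw [this.resolve_left hαi, (ih' m m.lt_succ_self i hi).2.2]
    ring
  · have key := hstep i le_rfl
    rw [hgrad i (by omega), sub_zero,
      h.exactStep_eq fun k hk => (ih' i (Nat.lt_succ_self _) k hk).1, div_mul_eq_mul_div, div_eq_iff (hd i (by omega))] at key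
    rw [div_mul_eq_mul_div, neg_add_eq_zero, eq_div_iff (hg i (by omega))]
    linear_combination key

end IsPCG

noncomputable def broydenVec (H : Matrix ι ι K) (s y : ι → K) : ι → K :=
  (1 / (s ⬝ᵥ y)) • s - (1 / (y ⬝ᵥ (H *ᵥ y))) • (H *ᵥ y)

noncomputable def broydenUpdate (H : Matrix ι ι K) (s y : ι → K) (φ : K) : Matrix ι ι K :=
  H + (1 / (s ⬝ᵥ y)) • vecMulVec s s - (1 / (y ⬝ᵥ (H *ᵥ y))) • vecMulVec (H *ᵥ y) (H *ᵥ y)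
    + (φ * (y ⬝ᵥ (H *ᵥ y))) • vecMulVec (broydenVec H s y) (broydenVec H s y)

noncomputable def broydenSingularParam [DecidableEq ι] (H : Matrix ι ι K) (s y : ι → K) : K :=
  (y ⬝ᵥ s) ^ 2 / ((y ⬝ᵥ s) ^ 2 - (y ⬝ᵥ (H *ᵥ y)) * (s ⬝ᵥ (H⁻¹ *ᵥ s)))

theorem broydenUpdate_mulVec (H : Matrix ι ι K) (s y : ι → K) (φ : K) (w : ι → K) :
    broydenUpdate H s y φ *ᵥ w = H *ᵥ w + ((s ⬝ᵥ w) / (s ⬝ᵥ y)) • s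
      - (((H *ᵥ y) ⬝ᵥ w) / (y ⬝ᵥ (H *ᵥ y))) • (H *ᵥ y)
      + (φ * (y ⬝ᵥ (H *ᵥ y)) * (broydenVec H s y ⬝ᵥ w)) • broydenVec H s y := by
  simp only [broydenUpdate, add_mulVec, sub_mulVec, smul_mulVec, vecMulVec_mulVec,
    op_smul_eq_smul, smul_smul, one_div, inv_mul_eq_div]

theorem broydenUpdate_mulVec_of_orthogonal (H : Matrix ι ι K) {s y w : ι → K} (φ : K)
    (hs : s ⬝ᵥ w = 0) (hy : (H *ᵥ y) ⬝ᵥ w = 0) : broydenUpdate H s y φ *ᵥ w = H *ᵥ w := by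
  have hv : broydenVec H s y ⬝ᵥ w = 0 := by
    simp [broydenVec, hs, hy]
  rw [broydenUpdate_mulVec, hs, hy, hv]
  simp

theorem broydenUpdate_mulVec_self (H : Matrix ι ι K) {s y : ι → K} (φ : K)
    (hsy : s ⬝ᵥ y ≠ 0) (hyHy : y ⬝ᵥ (H *ᵥ y) ≠ 0) : broydenUpdate H s y φ *ᵥ y = s := by
  have hv : broydenVec H s y ⬝ᵥ y = 0 := by
    rw [broydenVec, sub_dotProduct, smul_dotProduct, smul_dotProduct, dotProduct_comm (H *ᵥ y),
      smul_eq_mul, smul_eq_mul, one_div_mul_cancel hsy, one_div_mul_cancel hyHy, sub_self]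
  rw [broydenUpdate_mulVec, hv, div_self hsy, dotProduct_comm (H *ᵥ y), div_self hyHy]
  simp

theorem isSymm_broydenUpdate {H : Matrix ι ι K} (hH : H.IsSymm) (s y : ι → K) (φ : K) :
    (broydenUpdate H s y φ).IsSymm := by
  refine ((hH.add ?_).sub ?_).add ?_ <;> refine IsSymm.smul ?_ _ <;>
    exact transpose_vecMulVec _ _

theorem isUnit_broydenUpdate [DecidableEq ι] {H : Matrix ι ι K} (hH : H.IsSymm)
    (hU : IsUnit H) {s y : ι → K} {φ : K} (hsy : s ⬝ᵥ y ≠ 0) (hyHy : y ⬝ᵥ (H *ᵥ y) ≠ 0)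
    (hφ : φ ≠ broydenSingularParam H s y) : IsUnit (broydenUpdate H s y φ) := by
  suffices hker : ∀ w, broydenUpdate H s y φ *ᵥ w = 0 → w = 0 from
    mulVec_injective_iff_isUnit.mp fun u v huv =>
      sub_eq_zero.mp (hker _ (by rw [mulVec_sub, huv, sub_self]))
  intro w hw
  set σ := s ⬝ᵥ y with hσ
  set Y := y ⬝ᵥ (H *ᵥ y) with hY
  set t := (H *ᵥ y) ⬝ᵥ w with ht
  -- the secant equation `B y = s` and the symmetry of `B` give `s ⬝ᵥ w = y ⬝ᵥ B w = 0`
  have hsw : s ⬝ᵥ w = 0 := by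
    rw [← broydenUpdate_mulVec_self H φ hsy hyHy, dotProduct_comm,
      (isSymm_broydenUpdate hH s y φ).dotProduct_mulVec_comm,
      hw, dotProduct_zero]
  set z := H⁻¹ *ᵥ s
  have hz : H *ᵥ z = s := by
    rw [mulVec_mulVec, mul_nonsing_inv _ ((isUnit_iff_isUnit_det H).mp hU), one_mulVec]
  -- `B w = H w - H w'` with `w'` the right-hand side below
  have hw' : w = ((1 - φ) * t / Y) • y + (φ * t / σ) • z := by
    apply mulVec_injective_iff_isUnit.mpr hU
    rw [← sub_eq_zero, ← hw, broydenUpdate_mulVec, hsw, mulVec_add, mulVec_smul, mulVec_smul, hz]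
    simp only [broydenVec, sub_dotProduct, smul_dotProduct, hsw, smul_eq_mul, ← hσ, ← hY, ← ht]
    match_scalars <;> field_simp <;> ring
  -- if `t ≠ 0`, then `s ⬝ᵥ w' = 0` says precisely that `φ` is the singular parameter
  have ht : t = 0 := by
    by_contra ht0
    have hsz := congrArg (s ⬝ᵥ ·) hw'
    simp only [dotProduct_add, dotProduct_smul, smul_eq_mul, hsw, ← hσ] at hsz
    have key : σ ^ 2 = φ * (σ ^ 2 - Y * (s ⬝ᵥ z)) := by
      field_simp at hsz
      have hfac : t * ((1 - φ) * σ ^ 2 + φ * Y * (s ⬝ᵥ z)) = 0 := by linear_combination -hsz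
      linear_combination (mul_eq_zero.mp hfac).resolve_left ht0
    have hden : σ ^ 2 - Y * (s ⬝ᵥ z) ≠ 0 := fun h0 => by
      rw [h0, mul_zero] at key
      exact hsy (pow_eq_zero_iff two_ne_zero |>.mp key)
    exact hφ (by rw [broydenSingularParam, dotProduct_comm y s, eq_div_iff hden, ← key])
  rw [hw', ht]
  simp

/-- One Broyden update along an exact line-search step sends the new gradient to a multiple of the
next PCG direction `-p + (g' ⬝ᵥ p / ρ) • d`. -/
theorem broydenUpdate_mulVec_eq_smul {H : Matrix ι ι K} {g g' d p : ι → K} {α γ ρ : K} (φ : K)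
    (hHg : H *ᵥ g = -(γ • d)) (hHg' : H *ᵥ g' = p) (hdg' : d ⬝ᵥ g' = 0) (hgp : g ⬝ᵥ p = 0)
    (hgd : g ⬝ᵥ d = -ρ) (hα : α ≠ 0) (hρ : ρ ≠ 0)
    (hY : (g' - g) ⬝ᵥ (H *ᵥ (g' - g)) ≠ 0) :
    broydenUpdate H (α • d) (g' - g) φ *ᵥ g' =
      -(((γ * ρ + φ * (g' ⬝ᵥ p)) / (γ * ρ + g' ⬝ᵥ p)) • (-p + ((g' ⬝ᵥ p) / ρ) • d)) := by
  have hHy : H *ᵥ (g' - g) = p + γ • d := by rw [mulVec_sub, hHg, hHg', sub_neg_eq_add]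
  have hg'd : g' ⬝ᵥ d = 0 := by rw [dotProduct_comm, hdg']
  have hYval : (g' - g) ⬝ᵥ (p + γ • d) = γ * ρ + g' ⬝ᵥ p := by
    rw [sub_dotProduct, dotProduct_add, dotProduct_add, dotProduct_smul, dotProduct_smul,
      hg'd, hgp, hgd, smul_eq_mul, smul_eq_mul]
    ring
  have hσ : α • d ⬝ᵥ (g' - g) = α * ρ := by
    rw [smul_dotProduct, dotProduct_sub, hdg', dotProduct_comm, hgd, smul_eq_mul]
    ring
  have hpg' : (p + γ • d) ⬝ᵥ g' = g' ⬝ᵥ p := by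
    rw [add_dotProduct, smul_dotProduct, hdg', smul_zero, add_zero, dotProduct_comm]
  rw [hHy, hYval] at hY
  -- the denominator in the form `field_simp` normalizes it to
  have hY' : ρ * γ + g' ⬝ᵥ p ≠ 0 := by rwa [mul_comm]
  rw [broydenUpdate_mulVec, hHg']
  simp only [broydenVec, hHy, hYval, hσ, sub_dotProduct, smul_dotProduct, hpg',
    hdg', smul_eq_mul]
  match_scalars <;> field_simp <;> ring

theorem ne_zero_of_mulVec_eq_neg_smul [DecidableEq ι] {H : Matrix ι ι K} (hU : IsUnit H)
    {g d : ι → K} {c : K} (h : H *ᵥ g = -(c • d)) (hg : g ≠ 0) : c ≠ 0 := by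
  rintro rfl
  refine hg (mulVec_injective_iff_isUnit.mpr hU ?_)
  rw [h, zero_smul, neg_zero, mulVec_zero]

structure IsBroyden (A : Matrix ι ι K) (b : ι → K) (φ : ℕ → K) (x d s y g : ℕ → ι → K)
    (H : ℕ → Matrix ι ι K) : Prop where
  grad_eq : ∀ k, g k = A *ᵥ x k - b
  dir_eq : ∀ k, d k = -(H k *ᵥ g k)
  pos_succ : ∀ k, x (k + 1) = x k + exactStep A (g k) (d k) • d k
  step_eq : ∀ k, s k = x (k + 1) - x k
  grad_diff_eq : ∀ k, y k = A *ᵥ s k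
  update_eq : ∀ k, H (k + 1) = broydenUpdate (H k) (s k) (y k) (φ k)

def broydenScale (H₀ : Matrix ι ι K) (φ : ℕ → K) (g : ℕ → ι → K) : ℕ → K
  | 0 => 1
  | k + 1 =>
    (broydenScale H₀ φ g k * (g k ⬝ᵥ (H₀ *ᵥ g k)) + φ k * (g (k + 1) ⬝ᵥ (H₀ *ᵥ g (k + 1)))) /
      (broydenScale H₀ φ g k * (g k ⬝ᵥ (H₀ *ᵥ g k)) + g (k + 1) ⬝ᵥ (H₀ *ᵥ g (k + 1)))

namespace IsBroyden

variable {A H₀ : Matrix ι ι K} {b : ι → K} {φ : ℕ → K} {x d s y g xC dC gC : ℕ → ι → K}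
  {H : ℕ → Matrix ι ι K}

theorem pos_succ_eq_of_dir_eq_smul (hB : IsBroyden A b φ x d s y g H)
    (hP : IsPCG A H₀ b xC dC gC) {k : ℕ} {c : K} (hx : x k = xC k) (hd : d k = c • dC k)
    (hc : c ≠ 0) : x (k + 1) = xC (k + 1) := by
  have hg : g k = gC k := by rw [hB.grad_eq, hP.grad_eq, hx]
  rw [hB.pos_succ, hd, hg, exactStep_smul_smul _ _ _ hc, hx, hP.pos_succ]

theorem step_eq_of_pos_eq (hB : IsBroyden A b φ x d s y g H) (hP : IsPCG A H₀ b xC dC gC)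
    {k : ℕ} (hx : x k = xC k) (hx' : x (k + 1) = xC (k + 1)) :
    s k = exactStep A (gC k) (dC k) • dC k ∧ y k = gC (k + 1) - gC k := by
  have hs : s k = xC (k + 1) - xC k := by rw [hB.step_eq, hx, hx']
  refine ⟨by rw [hs, hP.pos_succ, add_sub_cancel_left], ?_⟩
  rw [hB.grad_diff_eq, hs, hP.grad_eq, hP.grad_eq, mulVec_sub, sub_sub_sub_cancel_right]

theorem dir_eq_smul_of_mulVec_eq (hB : IsBroyden A b φ x d s y g H) (hP : IsPCG A H₀ b xC dC gC)
    {k : ℕ} {c : K} (hx : x k = xC k) (hHg : H k *ᵥ gC k = -(c • dC k)) : d k = c • dC k := by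
  rw [hB.dir_eq, hB.grad_eq, hx, ← hP.grad_eq, hHg, neg_neg]

theorem pcg_invariant [DecidableEq ι] (hB : IsBroyden A b φ x d s y g H)
    (hP : IsPCG A H₀ b xC dC gC)
    (hA : A.IsSymm) (hH₀ : H₀.IsSymm) (hU₀ : IsUnit H₀) (hx₀ : x 0 = xC 0) (hH0 : H 0 = H₀)
    {j : ℕ} (hgC : ∀ k ≤ j, gC k ⬝ᵥ (H₀ *ᵥ gC k) ≠ 0) (hdC : ∀ k ≤ j, dC k ⬝ᵥ (A *ᵥ dC k) ≠ 0)
    (hφ : ∀ k ≤ j, φ k ≠ broydenSingularParam (H k) (s k) (y k))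
    (hy : ∀ k ≤ j, y k ⬝ᵥ (H k *ᵥ y k) ≠ 0) :
    ∀ k ≤ j, x k = xC k ∧ H k *ᵥ gC k = -(broydenScale H₀ φ g k • dC k) ∧ (H k).IsSymm ∧
      IsUnit (H k) ∧ ∀ w, (∀ i ≤ k, dC i ⬝ᵥ w = 0) → H k *ᵥ w = H₀ *ᵥ w := by
  intro k hk
  induction k with
  | zero =>
    rw [hH0]
    exact ⟨hx₀, by rw [hP.precond_grad_zero, broydenScale, one_smul], hH₀, hU₀, fun _ _ => rfl⟩
  | succ k ih =>
  obtain ⟨hx, hHg, hsymm, hU, hact⟩ := ih (by omega)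
  set γ := broydenScale H₀ φ g
  have hρ := hgC k (by omega)
  have hgk : g k = gC k := by rw [hB.grad_eq, hP.grad_eq, hx]
  have hγ : γ k ≠ 0 :=
    ne_zero_of_mulVec_eq_neg_smul hU hHg fun h0 => hρ (by rw [h0, zero_dotProduct])
  have hx' := hB.pos_succ_eq_of_dir_eq_smul hP hx (hB.dir_eq_smul_of_mulVec_eq hP hx hHg) hγ
  have hgk' : g (k + 1) = gC (k + 1) := by rw [hB.grad_eq, hP.grad_eq, hx']
  have horth := hP.orthogonal hA hH₀ (m := k + 1) (fun i hi => hgC i (by omega))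
    (fun i hi => hdC i (by omega))
  have hdg' : dC k ⬝ᵥ gC (k + 1) = 0 := by rw [dotProduct_comm]; exact (horth k k.lt_succ_self).1
  have hgp : gC k ⬝ᵥ (H₀ *ᵥ gC (k + 1)) = 0 := by
    rw [hH₀.dotProduct_mulVec_comm]; exact (horth k k.lt_succ_self).2.1
  have hgd : gC k ⬝ᵥ dC k = -(gC k ⬝ᵥ (H₀ *ᵥ gC k)) :=
    hP.grad_dotProduct_dir fun i hi => (hP.orthogonal hA hH₀ (fun i' hi' => hgC i' (by omega))
      (fun i' hi' => hdC i' (by omega)) i hi).1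
  have hα : exactStep A (gC k) (dC k) ≠ 0 := by
    rw [exactStep, hgd, neg_neg]; exact div_ne_zero hρ (hdC k (by omega))
  obtain ⟨hs, hy'⟩ := hB.step_eq_of_pos_eq hP hx hx'
  have hHg' : H k *ᵥ gC (k + 1) = H₀ *ᵥ gC (k + 1) :=
    hact _ fun i hi => by rw [dotProduct_comm]; exact (horth i (by omega)).1
  have hYk := hy k (by omega)
  have hφk := hφ k (by omega)
  rw [hy'] at hYk
  rw [hs, hy'] at hφk
  rw [hB.update_eq, hs, hy']
  refine ⟨hx', ?_, isSymm_broydenUpdate hsymm _ _ _, isUnit_broydenUpdate hsymm hU ?_ hYk hφk, ?_⟩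
  · rw [broydenUpdate_mulVec_eq_smul (φ k) hHg hHg' hdg' hgp hgd hα hρ hYk, hP.dir_succ]
    simp only [γ, broydenScale, hgk, hgk']
  · rw [smul_dotProduct, dotProduct_sub, hdg', dotProduct_comm, hgd, smul_eq_mul]
    simpa using ⟨hα, hρ⟩
  · intro w hw
    have hdw := hw k (by omega)
    have hsw : exactStep A (gC k) (dC k) • dC k ⬝ᵥ w = 0 := by rw [smul_dotProduct, hdw, smul_zero]
    have hyw : H k *ᵥ (gC (k + 1) - gC k) ⬝ᵥ w = 0 := by
      rw [mulVec_sub, hHg', hHg, hP.precond_grad_succ]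
      simp [sub_dotProduct, smul_dotProduct, hdw, hw (k + 1) le_rfl]
    rw [broydenUpdate_mulVec_of_orthogonal _ _ hsw hyw, hact w fun i hi => hw i (by omega)]

end IsBroyden

theorem broyden_pcg_proportionality_general
    (n : ℕ) (A H0 : Matrix (Fin n) (Fin n) ℝ) (b x0 : Fin n → ℝ)
    (hA : A.IsSymm) (hH0 : H0.PosDef)
    (j : ℕ)
    -- PCG sequences
    (xC dC gC : ℕ → Fin n → ℝ)
    (hgC : ∀ k, gC k = A *ᵥ xC k - b)
    (hxC0 : xC 0 = x0)
    (hdC0 : dC 0 = -(H0 *ᵥ gC 0))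
    (hdC : ∀ k, dC (k+1) = -(H0 *ᵥ gC (k+1)) +
      ((gC (k+1) ⬝ᵥ (H0 *ᵥ gC (k+1))) / (gC k ⬝ᵥ (H0 *ᵥ gC k))) • dC k)
    (hxC : ∀ k, xC (k+1) = xC k +
      (-(gC k ⬝ᵥ dC k) / (dC k ⬝ᵥ (A *ᵥ dC k))) • dC k)
    -- PCG iterations 0,…,j are well defined
    (hwf1 : ∀ k, k ≤ j → gC k ⬝ᵥ (H0 *ᵥ gC k) ≠ 0)
    (hwf2 : ∀ k, k ≤ j → dC k ⬝ᵥ (A *ᵥ dC k) ≠ 0)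
    -- Broyden-class method with exact line search
    (φ : ℕ → ℝ)
    (xB dB sB yB gB : ℕ → Fin n → ℝ) (H : ℕ → Matrix (Fin n) (Fin n) ℝ)
    (hgB : ∀ k, gB k = A *ᵥ xB k - b)
    (hxB0 : xB 0 = x0)
    (hH00 : H 0 = H0)
    (hdB : ∀ k, dB k = -(H k *ᵥ gB k))
    (hxB : ∀ k, xB (k+1) = xB k +
      (-(gB k ⬝ᵥ dB k) / (dB k ⬝ᵥ (A *ᵥ dB k))) • dB k)
    (hsB : ∀ k, sB k = xB (k+1) - xB k)
    (hyB : ∀ k, yB k = A *ᵥ sB k)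
    (hH : ∀ k, H (k+1) = H k
      + (1 / (sB k ⬝ᵥ yB k)) • vecMulVec (sB k) (sB k)
      - (1 / (yB k ⬝ᵥ (H k *ᵥ yB k))) • vecMulVec (H k *ᵥ yB k) (H k *ᵥ yB k)
      + (φ k * (yB k ⬝ᵥ (H k *ᵥ yB k))) •
          vecMulVec
            ((1 / (sB k ⬝ᵥ yB k)) • sB k - (1 / (yB k ⬝ᵥ (H k *ᵥ yB k))) • (H k *ᵥ yB k))
            ((1 / (sB k ⬝ᵥ yB k)) • sB k - (1 / (yB k ⬝ᵥ (H k *ᵥ yB k))) • (H k *ᵥ yB k)))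
    -- conditions for k = 0,…,j
    (hphi : ∀ k, k ≤ j → φ k ≠ (yB k ⬝ᵥ sB k) ^ 2 /
      ((yB k ⬝ᵥ sB k) ^ 2 - (yB k ⬝ᵥ (H k *ᵥ yB k)) * (sB k ⬝ᵥ ((H k)⁻¹ *ᵥ sB k))))
    (hyHy : ∀ k, k ≤ j → yB k ⬝ᵥ (H k *ᵥ yB k) ≠ 0) :
    ∃ γ : ℕ → ℝ, γ 0 = 1 ∧
      (∀ k, k ≤ j → (∀ i, i ≤ k → gB i ≠ 0) → γ k ≠ 0 ∧ dB k = γ k • dC k) ∧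
      (∀ k, k < j → (∀ i, i ≤ k + 1 → gB i ≠ 0) →
        γ (k+1) =
          (γ k * (gB k ⬝ᵥ (H0 *ᵥ gB k)) + φ k * (gB (k+1) ⬝ᵥ (H0 *ᵥ gB (k+1)))) /
          (γ k * (gB k ⬝ᵥ (H0 *ᵥ gB k)) + (gB (k+1) ⬝ᵥ (H0 *ᵥ gB (k+1))))) ∧
      (∀ k, k ≤ j → (∀ i, i ≤ k → gB i ≠ 0) → sB k = xC (k+1) - xC k) := by
  have hP : IsPCG A H0 b xC dC gC := ⟨hgC, hdC0, hdC, hxC⟩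
  have hB : IsBroyden A b φ xB dB sB yB gB H := ⟨hgB, hdB, hxB, hsB, hyB, hH⟩
  have hinv := hB.pcg_invariant hP hA (isHermitian_iff_isSymm.mp hH0.isHermitian) hH0.isUnit
    (hxB0.trans hxC0.symm) hH00 hwf1 hwf2 hphi hyHy
  have hprop : ∀ k ≤ j, xB k = xC k ∧ broydenScale H0 φ gB k ≠ 0 ∧
      dB k = broydenScale H0 φ gB k • dC k := fun k hk => by
    obtain ⟨hx, hHg, -, hU, -⟩ := hinv k hk
    exact ⟨hx, ne_zero_of_mulVec_eq_neg_smul hU hHg fun h0 => hwf1 k hk (by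
      rw [h0, zero_dotProduct]), hB.dir_eq_smul_of_mulVec_eq hP hx hHg⟩
  refine ⟨broydenScale H0 φ gB, rfl, fun k hk _ => (hprop k hk).2, fun k _ _ => rfl,
    fun k hk _ => ?_⟩
  obtain ⟨hx, hγ, hd⟩ := hprop k hk
  rw [hsB, hB.pos_succ_eq_of_dir_eq_smul hP hx hd hγ, hx]

/-- Broyden-class methods with exact line search generate directions
proportional to the preconditioned CG directions, with an explicit recurrence for the
proportionality coefficient, and their steps coincide with the PCG steps. -/
theorem broyden_pcg_proportionality
    (n : ℕ) (A H0 : Matrix (Fin n) (Fin n) ℝ) (b x0 : Fin n → ℝ)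
    (hA : A.IsSymm) (hH0 : H0.PosDef)
    (j : ℕ)
    -- PCG sequences
    (xC dC gC : ℕ → Fin n → ℝ)
    (hgC : ∀ k, gC k = A *ᵥ xC k - b)
    (hxC0 : xC 0 = x0)
    (hdC0 : dC 0 = -(H0 *ᵥ gC 0))
    (hdC : ∀ k, dC (k+1) = -(H0 *ᵥ gC (k+1)) +
      ((gC (k+1) ⬝ᵥ (H0 *ᵥ gC (k+1))) / (gC k ⬝ᵥ (H0 *ᵥ gC k))) • dC k)
    (hxC : ∀ k, xC (k+1) = xC k +
      (-(gC k ⬝ᵥ dC k) / (dC k ⬝ᵥ (A *ᵥ dC k))) • dC k)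
    -- PCG iterations 0,…,j are well defined
    (hwf1 : ∀ k, k ≤ j → gC k ⬝ᵥ (H0 *ᵥ gC k) ≠ 0)
    (hwf2 : ∀ k, k ≤ j → dC k ⬝ᵥ (A *ᵥ dC k) ≠ 0)
    -- Broyden-class method with exact line search
    (φ : ℕ → ℝ)
    (xB dB sB yB gB : ℕ → Fin n → ℝ) (H : ℕ → Matrix (Fin n) (Fin n) ℝ)
    (hgB : ∀ k, gB k = A *ᵥ xB k - b)
    (hxB0 : xB 0 = x0)
    (hH00 : H 0 = H0)
    (hdB : ∀ k, dB k = -(H k *ᵥ gB k))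
    (hxB : ∀ k, xB (k+1) = xB k +
      (-(gB k ⬝ᵥ dB k) / (dB k ⬝ᵥ (A *ᵥ dB k))) • dB k)
    (hsB : ∀ k, sB k = xB (k+1) - xB k)
    (hyB : ∀ k, yB k = A *ᵥ sB k)
    (hH : ∀ k, H (k+1) = H k
      + (1 / (sB k ⬝ᵥ yB k)) • vecMulVec (sB k) (sB k)
      - (1 / (yB k ⬝ᵥ (H k *ᵥ yB k))) • vecMulVec (H k *ᵥ yB k) (H k *ᵥ yB k)
      + (φ k * (yB k ⬝ᵥ (H k *ᵥ yB k))) •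
          vecMulVec
            ((1 / (sB k ⬝ᵥ yB k)) • sB k - (1 / (yB k ⬝ᵥ (H k *ᵥ yB k))) • (H k *ᵥ yB k))
            ((1 / (sB k ⬝ᵥ yB k)) • sB k - (1 / (yB k ⬝ᵥ (H k *ᵥ yB k))) • (H k *ᵥ yB k)))
    -- conditions for k = 0,…,j
    (hphi : ∀ k, k ≤ j → φ k ≠ (yB k ⬝ᵥ sB k) ^ 2 /
      ((yB k ⬝ᵥ sB k) ^ 2 - (yB k ⬝ᵥ (H k *ᵥ yB k)) * (sB k ⬝ᵥ ((H k)⁻¹ *ᵥ sB k))))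
    (hcurv : ∀ k, k ≤ j → sB k ⬝ᵥ (A *ᵥ sB k) ≠ 0)
    (hyHy : ∀ k, k ≤ j → yB k ⬝ᵥ (H k *ᵥ yB k) ≠ 0) :
    ∃ γ : ℕ → ℝ, γ 0 = 1 ∧
      (∀ k, k ≤ j → (∀ i, i ≤ k → gB i ≠ 0) → γ k ≠ 0 ∧ dB k = γ k • dC k) ∧
      (∀ k, k < j → (∀ i, i ≤ k + 1 → gB i ≠ 0) →
        γ (k+1) =
          (γ k * (gB k ⬝ᵥ (H0 *ᵥ gB k)) + φ k * (gB (k+1) ⬝ᵥ (H0 *ᵥ gB (k+1)))) /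
          (γ k * (gB k ⬝ᵥ (H0 *ᵥ gB k)) + (gB (k+1) ⬝ᵥ (H0 *ᵥ gB (k+1))))) ∧
      (∀ k, k ≤ j → (∀ i, i ≤ k → gB i ≠ 0) → sB k = xC (k+1) - xC k) :=
  broyden_pcg_proportionality_general n A H0 b x0 hA hH0 j xC dC gC hgC hxC0 hdC0 hdC hxC hwf1 hwf2
    φ xB dB sB yB gB H hgB hxB0 hH00 hdB hxB hsB hyB hH hphi hyHy
end

section
/- Let A = Aᵀ ∈ ℝ^{n×n}, b ∈ ℝⁿ, x₀ ∈ ℝⁿ, and run the full orthogonalization method (FOM): build the Arnoldi basis V_k and Hessenberg matrix T_k = V_kᵀAV_k with initial vector v₁ = r₀/‖r₀‖ where r₀ = b − Ax₀, and set x_k^{FOM} = x₀ + V_k w_k where T_k w_k = β e₁, β = ‖r₀‖. If T_k is nonsingular for k = 1,…,j, then x_k^{FOM} equals the k-th iterate of CG (i.e., PCG with H₀ = I) applied to Ax = b from the same x₀, for each k = 1,…,j. -/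
/-!
Both iterates are Galerkin solutions: `x_k ∈ x₀ + K_k` with residual `A x_k - b ⟂ K_k`, where
`K_k = span (v₁, …, v_k)`. Such a point is unique because `T_k = V_kᵀ A V_k` is nonsingular:
if `z ∈ K_k` and `A z ⟂ K_k`, then `T_k` kills the coordinates of `z`. For FOM the Galerkin
condition is the equation `T_k w_k = β e₁`. For CG one shows by induction that
`x_k - x₀ ∈ K_k`, that `g_k = c_k v_{k+1}`, and that `d_k + c_k v_{k+1} ∈ K_k` with `A d_k ⟂ K_k`.
The Arnoldi relation gives `A K_m ⊆ K_{m+1}`, and with the symmetry of `A` it makes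
`A v_{k+2} ⟂ K_k`, which keeps the new direction `A`-conjugate. Nonsingularity of `T_{k+1}`
gives `v_{k+1}ᵀ A d_k ≠ 0`, so the step length is meaningful whenever `g_k ≠ 0`.
-/

open Matrix

section

variable {n : ℕ}

def spanFirst (v : ℕ → Fin n → ℝ) (m : ℕ) : Submodule ℝ (Fin n → ℝ) :=
  Submodule.span ℝ (v '' Set.Icc 1 m)

def OrthonormalUpTo (v : ℕ → Fin n → ℝ) (N : ℕ) : Prop :=
  ∀ i l, 1 ≤ i → i ≤ N → 1 ≤ l → l ≤ N → v i ⬝ᵥ v l = if i = l then 1 else 0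

variable {v : ℕ → Fin n → ℝ}

theorem mem_spanFirst {m i : ℕ} (h1 : 1 ≤ i) (hm : i ≤ m) : v i ∈ spanFirst v m :=
  Submodule.subset_span ⟨i, ⟨h1, hm⟩, rfl⟩

theorem spanFirst_mono {m m' : ℕ} (h : m ≤ m') : spanFirst v m ≤ spanFirst v m' :=
  Submodule.span_mono (Set.image_mono (Set.Icc_subset_Icc le_rfl h))

theorem spanFirst_succ (m : ℕ) : spanFirst v (m + 1) = ℝ ∙ v (m + 1) ⊔ spanFirst v m := by
  rw [spanFirst, ← Set.insert_Icc_right_eq_Icc_add_one (by omega), Set.image_insert_eq,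
    Submodule.span_insert, spanFirst]

theorem sum_smul_mem_spanFirst (c : ℕ → ℝ) (m : ℕ) :
    ∑ i ∈ Finset.Icc 1 m, c i • v i ∈ spanFirst v m :=
  Submodule.sum_mem _ fun _ hi =>
    Submodule.smul_mem _ _ (mem_spanFirst (Finset.mem_Icc.mp hi).1 (Finset.mem_Icc.mp hi).2)

theorem dotProduct_eq_zero_of_mem_spanFirst {m : ℕ} {x y : Fin n → ℝ}
    (hx : ∀ i ∈ Set.Icc 1 m, v i ⬝ᵥ x = 0) (hy : y ∈ spanFirst v m) : y ⬝ᵥ x = 0 := by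
  induction hy using Submodule.span_induction with
  | mem _ h => obtain ⟨i, hi, rfl⟩ := h; exact hx i hi
  | zero => exact zero_dotProduct x
  | add _ _ _ _ h h' => rw [add_dotProduct, h, h', add_zero]
  | smul a _ _ h => rw [smul_dotProduct, h, smul_zero]

namespace OrthonormalUpTo

variable {N : ℕ} (hv : OrthonormalUpTo v N)
include hv

theorem dotProduct_self {i : ℕ} (h1 : 1 ≤ i) (hi : i ≤ N) : v i ⬝ᵥ v i = 1 := by
  simpa using hv i i h1 hi h1 hi

theorem dotProduct_eq_zero_of_mem_spanFirst {m q : ℕ} (hmq : m < q) (hq : q ≤ N)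
    {y : Fin n → ℝ} (hy : y ∈ spanFirst v m) : v q ⬝ᵥ y = 0 := by
  rw [dotProduct_comm]
  refine _root_.dotProduct_eq_zero_of_mem_spanFirst (fun i hi => ?_) hy
  rw [Set.mem_Icc] at hi
  simpa [show i ≠ q by omega] using hv i q hi.1 (by omega) (by omega) hq

theorem eq_smul_of_mem_spanFirst_succ {m : ℕ} (hm : m + 1 ≤ N) {g : Fin n → ℝ}
    (hg : g ∈ spanFirst v (m + 1)) (hperp : ∀ i ∈ Set.Icc 1 m, v i ⬝ᵥ g = 0) :
    g = (v (m + 1) ⬝ᵥ g) • v (m + 1) := by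
  rw [spanFirst_succ, Submodule.mem_sup] at hg
  obtain ⟨_, hz, y, hy, rfl⟩ := hg
  obtain ⟨a, rfl⟩ := Submodule.mem_span_singleton.mp hz
  have hvy : v (m + 1) ⬝ᵥ y = 0 := hv.dotProduct_eq_zero_of_mem_spanFirst (lt_add_one m) hm hy
  have hyy : y ⬝ᵥ y = 0 := by
    have h := _root_.dotProduct_eq_zero_of_mem_spanFirst hperp hy
    rwa [dotProduct_add, dotProduct_smul, dotProduct_comm y, hvy, smul_zero, zero_add] at h
  rw [dotProduct_self_eq_zero.mp hyy, add_zero, dotProduct_smul, hv.dotProduct_self (by omega) hm,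
    smul_eq_mul, mul_one]

theorem dotProduct_self_of_eq_smul {i : ℕ} (h1 : 1 ≤ i) (hi : i ≤ N) {g : Fin n → ℝ}
    (hg : g = (v i ⬝ᵥ g) • v i) : g ⬝ᵥ g = (v i ⬝ᵥ g) * (v i ⬝ᵥ g) := by
  conv_lhs => rw [hg]
  rw [smul_dotProduct, dotProduct_smul, hv.dotProduct_self h1 hi, smul_eq_mul, smul_eq_mul,
    mul_one]

end OrthonormalUpTo

theorem Matrix.IsSymm.dotProduct_mulVec_comm_s10 {ι R : Type*} [Fintype ι] [CommSemiring R]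
    {A : Matrix ι ι R} (hA : A.IsSymm) (x y : ι → R) : x ⬝ᵥ (A *ᵥ y) = y ⬝ᵥ (A *ᵥ x) := by
  rw [← dotProduct_transpose_mulVec, hA.eq]

def ArnoldiRelation (A : Matrix (Fin n) (Fin n) ℝ) (v : ℕ → Fin n → ℝ) (t : ℕ → ℕ → ℝ) (j : ℕ) :
    Prop :=
  ∀ k, 1 ≤ k → k ≤ j → A *ᵥ v k = (∑ i ∈ Finset.Icc 1 k, t i k • v i) + t (k + 1) k • v (k + 1)

section Arnoldi

variable {A : Matrix (Fin n) (Fin n) ℝ} {t : ℕ → ℕ → ℝ} {j : ℕ} (harn : ArnoldiRelation A v t j)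
include harn

theorem mulVec_mem_spanFirst_succ {m : ℕ} (hm : m ≤ j) {z : Fin n → ℝ}
    (hz : z ∈ spanFirst v m) : A *ᵥ z ∈ spanFirst v (m + 1) := by
  have hspan : spanFirst v m ≤ (spanFirst v (m + 1)).comap A.mulVecLin := by
    refine Submodule.span_le.mpr ?_
    rintro _ ⟨p, ⟨hp1, hpm⟩, rfl⟩
    rw [SetLike.mem_coe, Submodule.mem_comap, mulVecLin_apply, harn p hp1 (hpm.trans hm)]
    exact add_mem (spanFirst_mono (by omega) (sum_smul_mem_spanFirst _ p))
      (Submodule.smul_mem _ _ (mem_spanFirst (by omega) (by omega)))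
  exact hspan hz

variable {N : ℕ} (hv : OrthonormalUpTo v N)
include hv

theorem dotProduct_mulVec_eq_zero_of_mem_spanFirst {m q : ℕ} (hm : m ≤ j) (hmq : m + 1 < q)
    (hq : q ≤ N) {z : Fin n → ℝ} (hz : z ∈ spanFirst v m) : v q ⬝ᵥ (A *ᵥ z) = 0 :=
  hv.dotProduct_eq_zero_of_mem_spanFirst hmq hq (mulVec_mem_spanFirst_succ harn hm hz)

theorem dotProduct_mulVec_succ {p : ℕ} (h1 : 1 ≤ p) (hp : p ≤ j) (hN : p + 1 ≤ N) :
    v (p + 1) ⬝ᵥ (A *ᵥ v p) = t (p + 1) p := by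
  rw [harn p h1 hp, dotProduct_add,
    hv.dotProduct_eq_zero_of_mem_spanFirst (lt_add_one p) hN (sum_smul_mem_spanFirst _ p),
    dotProduct_smul, hv.dotProduct_self (by omega) hN, smul_eq_mul, mul_one, zero_add]

end Arnoldi

section Galerkin

variable {k : ℕ} {V : Matrix (Fin n) (Fin k) ℝ} (hV : ∀ r c, V r c = v ((c : ℕ) + 1) r)
include hV

theorem range_mulVecLin_eq_spanFirst : LinearMap.range V.mulVecLin = spanFirst v k := by
  rw [Matrix.range_mulVecLin, spanFirst]
  congr 1
  ext x
  constructor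
  · rintro ⟨c, rfl⟩
    exact ⟨c + 1, ⟨by omega, c.isLt⟩, funext fun r => (hV r c).symm⟩
  · rintro ⟨i, ⟨h1, hi⟩, rfl⟩
    refine ⟨⟨i - 1, by omega⟩, funext fun r => ?_⟩
    simp [Matrix.col, hV, Nat.sub_add_cancel h1]

theorem transpose_mulVec_apply (z : Fin n → ℝ) (c : Fin k) :
    (Vᵀ *ᵥ z) c = v ((c : ℕ) + 1) ⬝ᵥ z := by
  simp [mulVec, dotProduct, hV, mul_comm]

theorem eq_zero_of_mem_spanFirst_of_isUnit {A : Matrix (Fin n) (Fin n) ℝ}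
    (hT : IsUnit (Vᵀ * A * V)) {z : Fin n → ℝ} (hz : z ∈ spanFirst v k)
    (hperp : ∀ i ∈ Set.Icc 1 k, v i ⬝ᵥ (A *ᵥ z) = 0) : z = 0 := by
  obtain ⟨y, rfl⟩ := LinearMap.mem_range.mp ((range_mulVecLin_eq_spanFirst hV).symm ▸ hz)
  have hTy : (Vᵀ * A * V) *ᵥ y = 0 := by
    funext c
    rw [← mulVec_mulVec, ← mulVec_mulVec, transpose_mulVec_apply hV]
    exact hperp _ ⟨by omega, by omega⟩
  rw [mulVecLin_apply, mulVec_injective_iff_isUnit.mpr hT (hTy.trans (mulVec_zero _).symm),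
    mulVec_zero]

theorem mulVec_mem_spanFirst (y : Fin k → ℝ) : V *ᵥ y ∈ spanFirst v k :=
  range_mulVecLin_eq_spanFirst hV ▸ LinearMap.mem_range_self V.mulVecLin y

theorem eq_of_sub_mem_spanFirst_of_isUnit {A : Matrix (Fin n) (Fin n) ℝ}
    (hT : IsUnit (Vᵀ * A * V)) {b x0 x x' : Fin n → ℝ}
    (hx : x - x0 ∈ spanFirst v k) (hx' : x' - x0 ∈ spanFirst v k)
    (hr : ∀ i ∈ Set.Icc 1 k, v i ⬝ᵥ (A *ᵥ x - b) = 0)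
    (hr' : ∀ i ∈ Set.Icc 1 k, v i ⬝ᵥ (A *ᵥ x' - b) = 0) : x = x' := by
  refine sub_eq_zero.mp (eq_zero_of_mem_spanFirst_of_isUnit hV hT ?_ fun i hi => ?_)
  · simpa using sub_mem hx hx'
  · rw [mulVec_sub, ← sub_sub_sub_cancel_right _ _ b, dotProduct_sub, hr i hi, hr' i hi, sub_zero]

theorem dotProduct_fom_residual {N : ℕ} (hv : OrthonormalUpTo v N) (hkN : k ≤ N)
    {A : Matrix (Fin n) (Fin n) ℝ} {b x0 : Fin n → ℝ} {β : ℝ} (hr0 : b - A *ᵥ x0 = β • v 1)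
    {w : Fin k → ℝ} (hw : (Vᵀ * A * V) *ᵥ w = fun i : Fin k => if (i : ℕ) = 0 then β else 0) :
    ∀ i ∈ Set.Icc 1 k, v i ⬝ᵥ (A *ᵥ (x0 + V *ᵥ w) - b) = 0 := by
  rintro i ⟨hi1, hik⟩
  have hTw := congrFun hw ⟨i - 1, by omega⟩
  rw [← mulVec_mulVec, ← mulVec_mulVec, transpose_mulVec_apply hV, Nat.sub_add_cancel hi1] at hTw
  rw [mulVec_add, show A *ᵥ x0 + A *ᵥ (V *ᵥ w) - b = A *ᵥ (V *ᵥ w) - (b - A *ᵥ x0) by abel, hr0,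
    dotProduct_sub, hTw, dotProduct_smul, hv i 1 hi1 (by omega) le_rfl (by omega)]
  by_cases h : i = 1 <;> simp [h, show i - 1 = 0 ↔ i = 1 by omega]

end Galerkin

structure CGInvariant (A : Matrix (Fin n) (Fin n) ℝ) (v : ℕ → Fin n → ℝ) (x0 : Fin n → ℝ)
    (k : ℕ) (x g d : Fin n → ℝ) : Prop where
  iterate_mem : x - x0 ∈ spanFirst v k
  grad_eq : g = (v (k + 1) ⬝ᵥ g) • v (k + 1)
  dir_mem : d + (v (k + 1) ⬝ᵥ g) • v (k + 1) ∈ spanFirst v k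
  dir_perp : ∀ i ∈ Set.Icc 1 k, v i ⬝ᵥ (A *ᵥ d) = 0

namespace CGInvariant

variable {A : Matrix (Fin n) (Fin n) ℝ} {x0 : Fin n → ℝ}

theorem zero {g : Fin n → ℝ} {c : ℝ} (hv1 : v 1 ⬝ᵥ v 1 = 1) (hg : g = c • v 1) :
    CGInvariant A v x0 0 x0 g (-g) where
  iterate_mem := by simp
  grad_eq := by rw [hg, dotProduct_smul, hv1, smul_eq_mul, mul_one]
  dir_mem := by
    rw [hg, dotProduct_smul, hv1, smul_eq_mul, mul_one, neg_add_cancel]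
    exact zero_mem _
  dir_perp := by simp

variable {k : ℕ} {x g d : Fin n → ℝ} (h : CGInvariant A v x0 k x g d)
include h

theorem mem_spanFirst_succ : d ∈ spanFirst v (k + 1) := by
  have hmem := sub_mem (spanFirst_mono (Nat.le_succ k) h.dir_mem)
    (Submodule.smul_mem _ (v (k + 1) ⬝ᵥ g) (mem_spanFirst (v := v) (by omega) le_rfl))
  rwa [add_sub_cancel_right] at hmem

theorem dotProduct_mulVec_self :
    d ⬝ᵥ (A *ᵥ d) = -((v (k + 1) ⬝ᵥ g) * (v (k + 1) ⬝ᵥ (A *ᵥ d))) := by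
  have hy := dotProduct_eq_zero_of_mem_spanFirst h.dir_perp h.dir_mem
  rw [add_dotProduct, smul_dotProduct, smul_eq_mul] at hy
  linear_combination hy

/-- Because `x / 0 = 0`, a CG step from a zero gradient gives `x' = x` and `g' = d' = 0`. -/
theorem succ_of_grad_eq_zero (hg0 : g = 0) {b x' g' d' : Fin n → ℝ} (hg : g = A *ᵥ x - b)
    (hx' : x' = x + (g ⬝ᵥ g / (d ⬝ᵥ (A *ᵥ d))) • d) (hg' : g' = A *ᵥ x' - b)
    (hd' : d' = -g' + (g' ⬝ᵥ g' / (g ⬝ᵥ g)) • d) :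
    CGInvariant A v x0 (k + 1) x' g' d' := by
  obtain rfl : x' = x := by simp [hx', hg0]
  obtain rfl : g' = 0 := by rw [hg', ← hg, hg0]
  obtain rfl : d' = 0 := by simp [hd']
  exact ⟨spanFirst_mono (Nat.le_succ k) h.iterate_mem, by simp, by simp, by simp⟩

variable {N : ℕ} (hv : OrthonormalUpTo v N)
include hv

theorem grad_perp (hk : k + 1 ≤ N) : ∀ i ∈ Set.Icc 1 k, v i ⬝ᵥ g = 0 := by
  rintro i ⟨hi1, hik⟩
  rw [h.grad_eq, dotProduct_smul, hv i (k + 1) hi1 (by omega) (by omega) hk, if_neg (by omega),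
    smul_zero]

theorem dotProduct_mulVec_ne_zero (hk : k + 1 ≤ N) {V : Matrix (Fin n) (Fin (k + 1)) ℝ}
    (hV : ∀ r c, V r c = v ((c : ℕ) + 1) r) (hT : IsUnit (Vᵀ * A * V))
    (hc : v (k + 1) ⬝ᵥ g ≠ 0) : v (k + 1) ⬝ᵥ (A *ᵥ d) ≠ 0 := by
  intro hs
  have hd : d = 0 := by
    refine eq_zero_of_mem_spanFirst_of_isUnit hV hT h.mem_spanFirst_succ fun i ⟨hi1, hi2⟩ => ?_
    rcases le_or_gt i k with hik | hik
    · exact h.dir_perp i ⟨hi1, hik⟩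
    · rwa [show i = k + 1 by omega]
  apply hc
  have hy := hv.dotProduct_eq_zero_of_mem_spanFirst (lt_add_one k) hk h.dir_mem
  rwa [hd, zero_add, dotProduct_smul, hv.dotProduct_self (by omega) hk, smul_eq_mul,
    mul_one] at hy

variable {t : ℕ → ℕ → ℝ} {j : ℕ} (harn : ArnoldiRelation A v t j) (hkj : k + 1 ≤ j)
  (hkN : k + 2 ≤ N)
include harn hkj hkN

theorem dotProduct_succ_mulVec :
    v (k + 2) ⬝ᵥ (A *ᵥ d) = -((v (k + 1) ⬝ᵥ g) * t (k + 2) (k + 1)) := by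
  have hy := dotProduct_mulVec_eq_zero_of_mem_spanFirst harn hv (by omega) (lt_add_one (k + 1))
    hkN h.dir_mem
  rw [mulVec_add, mulVec_smul, dotProduct_add, dotProduct_smul,
    dotProduct_mulVec_succ harn hv (by omega) hkj hkN, smul_eq_mul] at hy
  linear_combination hy

theorem grad_update_eq_smul {α : ℝ} (hα : α * (v (k + 1) ⬝ᵥ (A *ᵥ d)) = -(v (k + 1) ⬝ᵥ g)) :
    g + α • (A *ᵥ d) = (v (k + 2) ⬝ᵥ (g + α • (A *ᵥ d))) • v (k + 2) := by
  refine hv.eq_smul_of_mem_spanFirst_succ (m := k + 1) hkN ?_ fun i ⟨hi1, hi2⟩ => ?_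
  · refine add_mem (spanFirst_mono (Nat.le_succ _) ?_)
      (Submodule.smul_mem _ _ (mulVec_mem_spanFirst_succ harn hkj h.mem_spanFirst_succ))
    rw [h.grad_eq]
    exact Submodule.smul_mem _ _ (mem_spanFirst (by omega) le_rfl)
  · rw [dotProduct_add, dotProduct_smul, smul_eq_mul]
    rcases le_or_gt i k with hik | hik
    · rw [h.grad_perp hv (by omega) i ⟨hi1, hik⟩, h.dir_perp i ⟨hi1, hik⟩, mul_zero, add_zero]
    · rw [show i = k + 1 by omega, hα, add_neg_cancel]

theorem dir_update_perp (hA : A.IsSymm) (hc : v (k + 1) ⬝ᵥ g ≠ 0) {c' : ℝ}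
    (hc' : c' * (v (k + 1) ⬝ᵥ (A *ᵥ d)) =
      (v (k + 1) ⬝ᵥ g) * (v (k + 1) ⬝ᵥ g) * t (k + 2) (k + 1)) :
    ∀ i ∈ Set.Icc 1 (k + 1), v i ⬝ᵥ
      (A *ᵥ (-(c' • v (k + 2)) + (c' * c' / ((v (k + 1) ⬝ᵥ g) * (v (k + 1) ⬝ᵥ g))) • d)) = 0 := by
  rintro i ⟨hi1, hi2⟩
  rw [mulVec_add, mulVec_neg, mulVec_smul, mulVec_smul, dotProduct_add, dotProduct_neg,
    dotProduct_smul, dotProduct_smul, hA.dotProduct_mulVec_comm_s10 (v i), smul_eq_mul, smul_eq_mul]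
  rcases le_or_gt i k with hik | hik
  · rw [dotProduct_mulVec_eq_zero_of_mem_spanFirst harn hv (m := i) (by omega) (by omega) hkN
      (mem_spanFirst hi1 le_rfl), h.dir_perp i ⟨hi1, hik⟩]
    simp
  · obtain rfl : i = k + 1 := by omega
    rw [dotProduct_mulVec_succ harn hv (by omega) hkj hkN]
    have hc0 : v (k + 1) ⬝ᵥ g * v (k + 1) ⬝ᵥ g ≠ 0 := mul_ne_zero hc hc
    field_simp
    linear_combination c' * hc'

theorem succ (hA : A.IsSymm) {V : Matrix (Fin n) (Fin (k + 1)) ℝ}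
    (hV : ∀ r c, V r c = v ((c : ℕ) + 1) r) (hT : IsUnit (Vᵀ * A * V))
    (hc : v (k + 1) ⬝ᵥ g ≠ 0) {b x' g' d' : Fin n → ℝ} (hg : g = A *ᵥ x - b)
    (hx' : x' = x + (g ⬝ᵥ g / (d ⬝ᵥ (A *ᵥ d))) • d) (hg' : g' = A *ᵥ x' - b)
    (hd' : d' = -g' + (g' ⬝ᵥ g' / (g ⬝ᵥ g)) • d) :
    CGInvariant A v x0 (k + 1) x' g' d' := by
  set c := v (k + 1) ⬝ᵥ g with hc_def
  set s := v (k + 1) ⬝ᵥ (A *ᵥ d) with hs_def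
  set α := g ⬝ᵥ g / (d ⬝ᵥ (A *ᵥ d)) with hα_def
  have hgg : g ⬝ᵥ g = c * c := hv.dotProduct_self_of_eq_smul (by omega) (by omega) h.grad_eq
  have hs : s ≠ 0 := h.dotProduct_mulVec_ne_zero hv (by omega) hV hT hc
  have hα : α * s = -c := by
    rw [hα_def, hgg, h.dotProduct_mulVec_self, ← hc_def, ← hs_def]
    field_simp
  have hg'_upd : g' = g + α • (A *ᵥ d) := by
    rw [hg', hx', mulVec_add, mulVec_smul, hg]
    abel
  have hg'_eq : g' = (v (k + 2) ⬝ᵥ g') • v (k + 2) :=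
    hg'_upd ▸ h.grad_update_eq_smul hv harn hkj hkN hα
  set c' := v (k + 2) ⬝ᵥ g' with hc'_def
  have hc's : c' * s = c * c * t (k + 2) (k + 1) := by
    have hvg : v (k + 2) ⬝ᵥ g = 0 := by
      rw [h.grad_eq, dotProduct_smul, hv (k + 2) (k + 1) (by omega) hkN (by omega) (by omega),
        if_neg (by omega), smul_zero]
    rw [hc'_def, hg'_upd, dotProduct_add, dotProduct_smul, hvg,
      h.dotProduct_succ_mulVec hv harn hkj hkN, smul_eq_mul]
    linear_combination (-(c * t (k + 2) (k + 1))) * hα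
  have hd'_eq : d' = -(c' • v (k + 2)) + (c' * c' / (c * c)) • d := by
    rw [hd', hv.dotProduct_self_of_eq_smul (by omega) hkN hg'_eq, hgg, ← hc'_def]
    nth_rewrite 1 [hg'_eq]
    rfl
  refine ⟨?_, hg'_eq, ?_, hd'_eq ▸ h.dir_update_perp hv harn hkj hkN hA hc hc's⟩
  · rw [hx', add_sub_right_comm]
    exact add_mem (spanFirst_mono (Nat.le_succ k) h.iterate_mem)
      (Submodule.smul_mem _ _ h.mem_spanFirst_succ)
  · rw [hd'_eq, neg_add_cancel_comm]
    exact Submodule.smul_mem _ _ h.mem_spanFirst_succ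

end CGInvariant

theorem cgInvariant_of_le {A : Matrix (Fin n) (Fin n) ℝ} (hA : A.IsSymm) {t : ℕ → ℕ → ℝ} {j : ℕ}
    (hv : OrthonormalUpTo v (j + 1)) (harn : ArnoldiRelation A v t j)
    {V : (k : ℕ) → Matrix (Fin n) (Fin k) ℝ} (hV : ∀ k r c, V k r c = v ((c : ℕ) + 1) r)
    (hT : ∀ k, 1 ≤ k → k ≤ j → IsUnit ((V k)ᵀ * A * V k))
    {b x0 : Fin n → ℝ} {β : ℝ} (hr0 : b - A *ᵥ x0 = β • v 1) {xC dC gC : ℕ → Fin n → ℝ}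
    (hgC : ∀ k, gC k = A *ᵥ xC k - b) (hxC0 : xC 0 = x0) (hdC0 : dC 0 = -gC 0)
    (hdC : ∀ k, dC (k + 1) = -gC (k + 1) + ((gC (k + 1) ⬝ᵥ gC (k + 1)) / (gC k ⬝ᵥ gC k)) • dC k)
    (hxC : ∀ k, xC (k + 1) = xC k + ((gC k ⬝ᵥ gC k) / (dC k ⬝ᵥ (A *ᵥ dC k))) • dC k) :
    ∀ k ≤ j, CGInvariant A v x0 k (xC k) (gC k) (dC k) := by
  intro k
  induction k with
  | zero =>
    intro _
    rw [hxC0, hdC0]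
    exact .zero (hv.dotProduct_self le_rfl (by omega)) (by rw [hgC, hxC0, ← neg_sub, hr0, neg_smul])
  | succ k ih =>
    intro hk
    have h := ih (by omega)
    by_cases hc : v (k + 1) ⬝ᵥ gC k = 0
    · exact h.succ_of_grad_eq_zero (by rw [h.grad_eq, hc, zero_smul]) (hgC k) (hxC k)
        (hgC (k + 1)) (hdC k)
    · exact h.succ hv harn hk (by omega) hA (hV (k + 1)) (hT (k + 1) (by omega) hk) hc (hgC k)
        (hxC k) (hgC (k + 1)) (hdC k)

end

theorem fom_eq_cg_general
    (n : ℕ) (A : Matrix (Fin n) (Fin n) ℝ) (hA : A.IsSymm)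
    (b x0 : Fin n → ℝ) (j : ℕ)
    (β : ℝ)
    -- Arnoldi process (vectors indexed from 1)
    (v : ℕ → Fin n → ℝ) (t : ℕ → ℕ → ℝ)
    (hv1 : v 1 = β⁻¹ • (b - A *ᵥ x0))
    (horth : ∀ i l, 1 ≤ i → i ≤ j + 1 → 1 ≤ l → l ≤ j + 1 →
      v i ⬝ᵥ v l = if i = l then 1 else 0)
    (harn : ∀ k, 1 ≤ k → k ≤ j →
      A *ᵥ v k = (∑ i ∈ Finset.Icc 1 k, t i k • v i) + t (k+1) k • v (k+1))
    -- the Krylov basis and Hessenberg matrices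
    (V : (k : ℕ) → Matrix (Fin n) (Fin k) ℝ)
    (hV : ∀ k, ∀ (r : Fin n) (c : Fin k), V k r c = v ((c : ℕ) + 1) r)
    (T : (k : ℕ) → Matrix (Fin k) (Fin k) ℝ)
    (hT : ∀ k, T k = (V k)ᵀ * A * V k)
    -- the FOM iterates
    (w : (k : ℕ) → Fin k → ℝ)
    (hw : ∀ k, 1 ≤ k → k ≤ j →
      T k *ᵥ w k = fun i : Fin k => if (i : ℕ) = 0 then β else 0)
    (xF : ℕ → Fin n → ℝ)
    (hxF : ∀ k, 1 ≤ k → k ≤ j → xF k = x0 + V k *ᵥ w k)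
    -- the Hessenberg matrices are nonsingular for k = 1,…,j
    (hTns : ∀ k, 1 ≤ k → k ≤ j → IsUnit (T k))
    -- CG (PCG with H₀ = I) from the same starting point
    (xC dC gC : ℕ → Fin n → ℝ)
    (hgC : ∀ k, gC k = A *ᵥ xC k - b)
    (hxC0 : xC 0 = x0)
    (hdC0 : dC 0 = -gC 0)
    (hdC : ∀ k, dC (k+1) = -gC (k+1) + ((gC (k+1) ⬝ᵥ gC (k+1)) / (gC k ⬝ᵥ gC k)) • dC k)
    (hxC : ∀ k, xC (k+1) = xC k + ((gC k ⬝ᵥ gC k) / (dC k ⬝ᵥ (A *ᵥ dC k))) • dC k) :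
    ∀ k, 1 ≤ k → k ≤ j → xF k = xC k := by
  have hv : OrthonormalUpTo v (j + 1) := horth
  have hr0 : b - A *ᵥ x0 = β • v 1 := by
    have hv11 := hv.dotProduct_self le_rfl (by omega)
    have hβ : β ≠ 0 := by
      rintro rfl
      simp [hv1] at hv11
    exact ((inv_smul_eq_iff₀ hβ).mp hv1.symm)
  have hTns' : ∀ k, 1 ≤ k → k ≤ j → IsUnit ((V k)ᵀ * A * V k) := fun k hk1 hkj =>
    hT k ▸ hTns k hk1 hkj
  intro k hk1 hkj
  have h := cgInvariant_of_le hA hv harn hV hTns' hr0 hgC hxC0 hdC0 hdC hxC k hkj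
  rw [hxF k hk1 hkj]
  refine eq_of_sub_mem_spanFirst_of_isUnit (hV k) (hTns' k hk1 hkj) (b := b) ?_
    h.iterate_mem ?_ fun i hi => (hgC k) ▸ h.grad_perp hv (by omega) i hi
  · simpa using mulVec_mem_spanFirst (hV k) (w k)
  · exact dotProduct_fom_residual (hV k) hv (by omega) hr0 (hT k ▸ hw k hk1 hkj)

/-- For a symmetric matrix `A`, if the Hessenberg matrices
`T_k = V_kᵀ A V_k` produced by the Arnoldi process are nonsingular for `k = 1,…,j`,
then the FOM iterates coincide with the CG iterates started from the same point. -/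
theorem fom_eq_cg
    (n : ℕ) (A : Matrix (Fin n) (Fin n) ℝ) (hA : A.IsSymm)
    (b x0 : Fin n → ℝ) (j : ℕ)
    (β : ℝ) (hβ : β = Real.sqrt ((b - A *ᵥ x0) ⬝ᵥ (b - A *ᵥ x0)))
    -- Arnoldi process (vectors indexed from 1)
    (v : ℕ → Fin n → ℝ) (t : ℕ → ℕ → ℝ)
    (hv1 : v 1 = β⁻¹ • (b - A *ᵥ x0))
    (horth : ∀ i l, 1 ≤ i → i ≤ j + 1 → 1 ≤ l → l ≤ j + 1 →
      v i ⬝ᵥ v l = if i = l then 1 else 0)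
    (harn : ∀ k, 1 ≤ k → k ≤ j →
      A *ᵥ v k = (∑ i ∈ Finset.Icc 1 k, t i k • v i) + t (k+1) k • v (k+1))
    (htpos : ∀ k, 1 ≤ k → k ≤ j → 0 < t (k+1) k)
    -- the Krylov basis and Hessenberg matrices
    (V : (k : ℕ) → Matrix (Fin n) (Fin k) ℝ)
    (hV : ∀ k, ∀ (r : Fin n) (c : Fin k), V k r c = v ((c : ℕ) + 1) r)
    (T : (k : ℕ) → Matrix (Fin k) (Fin k) ℝ)
    (hT : ∀ k, T k = (V k)ᵀ * A * V k)
    -- the FOM iterates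
    (w : (k : ℕ) → Fin k → ℝ)
    (hw : ∀ k, 1 ≤ k → k ≤ j →
      T k *ᵥ w k = fun i : Fin k => if (i : ℕ) = 0 then β else 0)
    (xF : ℕ → Fin n → ℝ)
    (hxF : ∀ k, 1 ≤ k → k ≤ j → xF k = x0 + V k *ᵥ w k)
    -- the Hessenberg matrices are nonsingular for k = 1,…,j
    (hTns : ∀ k, 1 ≤ k → k ≤ j → IsUnit (T k))
    -- CG (PCG with H₀ = I) from the same starting point
    (xC dC gC : ℕ → Fin n → ℝ)
    (hgC : ∀ k, gC k = A *ᵥ xC k - b)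
    (hxC0 : xC 0 = x0)
    (hdC0 : dC 0 = -gC 0)
    (hdC : ∀ k, dC (k+1) = -gC (k+1) + ((gC (k+1) ⬝ᵥ gC (k+1)) / (gC k ⬝ᵥ gC k)) • dC k)
    (hxC : ∀ k, xC (k+1) = xC k + ((gC k ⬝ᵥ gC k) / (dC k ⬝ᵥ (A *ᵥ dC k))) • dC k) :
    ∀ k, 1 ≤ k → k ≤ j → xF k = xC k :=
  fom_eq_cg_general n A hA b x0 j β v t hv1 horth harn V hV T hT w hw xF hxF hTns xC dC gC hgC hxC0
    hdC0 hdC hxC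
end
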